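/- arXiv:2602.04275 — 2 statements merged into one kernel-verified Lean document; each statement's English description precedes it below -/
import Mathlib

section
/- Let (X, ν) be a probability space, T measure-preserving with ν ergodic for T, and suppose p, q ≥ 1 with C : X → ℤ/pℤ measurable satisfying C(T x) = C(x) + (q mod p) a.e. If ν is ergodic for T^{pq} (e.g. if (X, T^q, ν) is Bernoulli), then p divides q. -/
open MeasureTheory

/-! Iterating the cocycle identity gives `C ∘ T^[pq] = C + pq • q = C` a.e. in `ℤ/pℤ`, so ergodicity
of `T^[pq]` forces `C` to be a.e. constant. A constant solution of `C ∘ T = C + q` has `q = 0`,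
i.e. `p ∣ q`. -/

instance ZMod.instCountable (n : ℕ) : Countable (ZMod n) :=
  ZMod.intCast_surjective.countable

section Cocycle

variable {α G : Type*} [MeasurableSpace α] {μ : Measure α} {f : α → α} [AddMonoid G]
  {C : α → G} {a : G}

theorem ae_comp_iterate_eq_add_nsmul (hf : Measure.QuasiMeasurePreserving f μ μ)
    (hC : ∀ᵐ x ∂μ, C (f x) = C x + a) (n : ℕ) :
    ∀ᵐ x ∂μ, C (f^[n] x) = C x + n • a := by
  induction n with
  | zero => simp
  | succ n ih =>
    filter_upwards [ih, (hf.iterate n).ae hC] with x hn hstep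
    rw [Function.iterate_succ_apply', hstep, hn, succ_nsmul, add_assoc]

theorem eq_zero_of_ae_comp_eq_add_of_ae_eq_const [NeZero μ] [IsLeftCancelAdd G]
    (hf : Measure.QuasiMeasurePreserving f μ μ) (hC : ∀ᵐ x ∂μ, C (f x) = C x + a) {c : G}
    (hc : C =ᵐ[μ] Function.const α c) : a = 0 := by
  obtain ⟨x, hx, hcx, hcfx⟩ := (hC.and (hc.and (hf.ae hc))).exists
  simp only [Function.const_apply] at hcx hcfx
  rw [hcfx, hcx] at hx
  exact left_eq_add.mp hx

end Cocycle

theorem stmt8_general {X : Type*} [MeasurableSpace X] (ν : Measure X)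
    [IsProbabilityMeasure ν]
    (T : X → X)
    (p q : ℕ)
    [MeasurableSpace (ZMod p)] [MeasurableSingletonClass (ZMod p)]
    (C : X → ZMod p) (hC : Measurable C)
    (hcoc : ∀ᵐ x ∂ν, C (T x) = C x + (q : ZMod p))
    (hergT : Ergodic T ν) (hergpq : Ergodic (T^[p * q]) ν) :
    p ∣ q := by
  have hmp := hergT.toMeasurePreserving.quasiMeasurePreserving
  have hinv : C ∘ T^[p * q] =ᵐ[ν] C := by
    filter_upwards [ae_comp_iterate_eq_add_nsmul hmp hcoc (p * q)] with x hx
    rw [Function.comp_apply, hx, nsmul_eq_mul, Nat.cast_mul, ZMod.natCast_self, zero_mul,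
      zero_mul, add_zero]
  obtain ⟨c, hc⟩ := hergpq.ae_eq_const_of_ae_eq_comp₀ hC.nullMeasurable hinv
  exact (ZMod.natCast_eq_zero_iff q p).mp
    (eq_zero_of_ae_comp_eq_add_of_ae_eq_const hmp hcoc hc)

/-- If T preserves the ergodic probability measure ν, C : X → ℤ/pℤ satisfies
C(Tx) = C(x) + (q mod p) a.e., and ν is ergodic for T^{pq}, then p divides q. -/
theorem stmt8 {X : Type*} [MeasurableSpace X] (ν : Measure X)
    [IsProbabilityMeasure ν]
    (T : X → X) (hTbij : Function.Bijective T)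
    (p q : ℕ) (hp : 0 < p) (hq : 0 < q)
    [MeasurableSpace (ZMod p)] [MeasurableSingletonClass (ZMod p)]
    (C : X → ZMod p) (hC : Measurable C)
    (hcoc : ∀ᵐ x ∂ν, C (T x) = C x + (q : ZMod p))
    (hergT : Ergodic T ν) (hergpq : Ergodic (T^[p * q]) ν) :
    p ∣ q :=
  stmt8_general ν T p q C hC hcoc hergT hergpq
end

section
/- Let f : M → M be measure-preserving for an ergodic probability measure ν, let p ≥ 1, and write ν = (1/p) Σ_{j=0}^{p−1} f^j_* ρ where ρ is an ergodic component of ν with respect to f^p. Then each f^j_* ρ is f^p-invariant, f_* (f^{p−1}_* ρ) = ρ holds up to the decomposition (i.e. f permutes the measures f^j_* ρ cyclically), and each f^j_* ρ is f^p-ergodic. -/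
open MeasureTheory

theorem Ergodic.map_of_commute {α : Type*} [MeasurableSpace α] {f g : α → α} {μ : Measure α}
    (hf : Ergodic f μ) (hg : Measurable g) (hfg : Function.Commute g f) :
    Ergodic f (μ.map g) :=
  (hg.measurePreserving μ).ergodic_of_ergodic_semiconj hf hf.measurable hfg

theorem Ergodic.map_iterate {α : Type*} [MeasurableSpace α] {f : α → α} {μ : Measure α}
    (hf : Measurable f) {p : ℕ} (h : Ergodic f^[p] μ) (j : ℕ) :
    Ergodic f^[p] (μ.map f^[j]) :=
  h.map_of_commute (hf.iterate j) (Function.Commute.iterate_iterate_self f j p)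

theorem stmt18_general {Ω : Type*} [MeasurableSpace Ω] (f : Ω → Ω) (hf : Measurable f)
    (ρ : Measure Ω) (p : ℕ) (hp : 0 < p)
    (hρ : Ergodic (f^[p]) ρ) :
    (∀ j < p, Measure.map (f^[p]) (Measure.map (f^[j]) ρ)
      = Measure.map (f^[j]) ρ)
    ∧ Measure.map f (Measure.map (f^[p - 1]) ρ) = ρ
    ∧ ∀ j < p, Ergodic (f^[p]) (Measure.map (f^[j]) ρ) := by
  refine ⟨fun j _ => (hρ.map_iterate hf j).toMeasurePreserving.map_eq, ?_,
    fun j _ => hρ.map_iterate hf j⟩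
  rw [Measure.map_map hf (hf.iterate _), ← Function.iterate_succ', Nat.succ_eq_add_one,
    Nat.sub_one_add_one_eq_of_pos hp, hρ.toMeasurePreserving.map_eq]

/-- Cyclic structure of the ergodic components of an f-ergodic measure ν with
respect to f^p: if ν = (1/p) Σ_{j<p} f^j_* ρ with ρ an f^p-ergodic component,
then each f^j_* ρ is f^p-invariant, f permutes them cyclically
(f_*(f^{p−1}_* ρ) = ρ), and each f^j_* ρ is f^p-ergodic. -/
theorem stmt18 {Ω : Type*} [MeasurableSpace Ω] (f : Ω → Ω) (hf : Measurable f)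
    (hbij : Function.Bijective f)
    (ν ρ : Measure Ω) [IsProbabilityMeasure ν] [IsProbabilityMeasure ρ]
    (hν : Ergodic f ν) (p : ℕ) (hp : 0 < p)
    (hρ : Ergodic (f^[p]) ρ)
    (hdec : ν = (p : ENNReal)⁻¹ •
      ∑ j ∈ Finset.range p, Measure.map (f^[j]) ρ) :
    (∀ j < p, Measure.map (f^[p]) (Measure.map (f^[j]) ρ)
      = Measure.map (f^[j]) ρ)
    ∧ Measure.map f (Measure.map (f^[p - 1]) ρ) = ρ
    ∧ ∀ j < p, Ergodic (f^[p]) (Measure.map (f^[j]) ρ) :=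
  stmt18_general f hf ρ p hp hρ
end
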